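/- arXiv:math/0509325 — 2 statements merged into one kernel-verified Lean document; each statement's English description precedes it below -/
import Mathlib

section
/- Let C ⊆ Z_{2^k}^n and C̃ = Φ(C) ⊆ Z_2^{mn} with m = 2^{k-1}. Then W_{C̃}(X,Y) = SW_C(W_{H_0}(X,Y), W_{H_1}(X,Y), W_{H_2}(X,Y)), where SW_C(X,Z,T) is the symmetrized weight enumerator of C obtained from the complete weight enumerator by substituting X for symbol 0, Z for all odd symbols, and T for all nonzero even symbols. -/
/-!
`Φ(C)` is the disjoint union over `x ∈ C` of the product codes `H_{x_1} × ⋯ × H_{x_n}`, so its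
weight enumerator is `∑_{x ∈ C} ∏ᵢ W_{H_{xᵢ}}`, and it remains to see that all `H_j` with `j ≠ 0`
of the same weight parity have the same weight enumerator.

Let `S` be an extended 1-perfect code of length `N`. For a coordinate `i`, the translates of `S`
by the `2N` vectors `sᵢ eᵢ + e_l` tile `Z_2^N` (this is the perfect code obtained by puncturing
at `i`). Summing a Walsh character `χ_a` with `aᵢ = 0` over this tiling gives
`Ŝ(a) · 2 (N - 2 wt(a)) = 0`, so `Ŝ(a)` vanishes unless `a ∈ {0, 𝟙}` or `wt(a) = N / 2`. By
MacWilliams inversion, `2^N W_S(X, Y) = |S| ((X+Y)^N ± (X-Y)^N) + T (X+Y)^{N/2} (X-Y)^{N/2}`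
with the sign given by the weight parity of `S`, and the single unknown `T` is forced by
`W_S(1, 0) = 0` when `0 ∉ S`.
-/

open Finset Function

section Codes

variable {ι κ α β : Type*} [Fintype ι] [DecidableEq ι]

def prodCode (A : ι → Finset (κ → α)) : Finset (ι × κ → α) :=
  (Fintype.piFinset A).map (Equiv.curry ι κ α).symm.toEmbedding

theorem mem_prodCode {A : ι → Finset (κ → α)} {u : ι × κ → α} :
    u ∈ prodCode A ↔ ∀ i, (fun j => u (i, j)) ∈ A i := by
  simp only [prodCode, mem_map_equiv, Equiv.symm_symm, Equiv.curry_apply, Fintype.mem_piFinset]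
  rfl

def concatCode [Fintype κ] [DecidableEq α] (H : β → Finset (κ → α)) (C : Finset (ι → β)) :
    Finset (ι × κ → α) :=
  C.biUnion fun x => prodCode (H ∘ x)

theorem coe_concatCode [Fintype κ] [DecidableEq α] (H : β → Finset (κ → α)) (C : Finset (ι → β)) :
    (concatCode H C : Set (ι × κ → α)) = {u | ∃ x ∈ C, ∀ i, (fun j => u (i, j)) ∈ H (x i)} := by
  ext u
  simp [concatCode, mem_prodCode]

end Codes

section WeightEnumerator

variable {ι κ α β R : Type*} [Fintype κ] [DecidableEq α] [Zero α] [CommSemiring R]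

def weightEnum (S : Finset (κ → α)) (X Y : R) : R :=
  ∑ u ∈ S, X ^ (Fintype.card κ - hammingNorm u) * Y ^ hammingNorm u

theorem prod_ite_eq_zero_eq_pow_mul_pow (u : κ → α) (X Y : R) :
    ∏ l, (if u l = 0 then X else Y) = X ^ (Fintype.card κ - hammingNorm u) * Y ^ hammingNorm u := by
  rw [prod_ite, prod_const, prod_const]
  congr 2
  rw [← card_univ, ← card_filter_add_card_filter_not (s := univ) (fun l => u l = 0)]
  exact (Nat.add_sub_cancel _ _).symm

theorem weightEnum_eq_sum_prod (S : Finset (κ → α)) (X Y : R) :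
    weightEnum S X Y = ∑ u ∈ S, ∏ l, if u l = 0 then X else Y := by
  simp only [weightEnum, prod_ite_eq_zero_eq_pow_mul_pow]

theorem weightEnum_one_zero {S : Finset (κ → α)} (h0 : 0 ∉ S) : weightEnum S (1 : R) 0 = 0 := by
  refine sum_eq_zero fun u hu => ?_
  rw [zero_pow (hammingNorm_ne_zero_iff.mpr (ne_of_mem_of_not_mem hu h0)), mul_zero]

variable [Fintype ι] [DecidableEq ι]

theorem weightEnum_prodCode (A : ι → Finset (κ → α)) (X Y : R) :
    weightEnum (prodCode A) X Y = ∏ i, weightEnum (A i) X Y := by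
  simp only [weightEnum_eq_sum_prod, prodCode, sum_map, prod_univ_sum, Fintype.prod_prod_type]
  rfl

theorem weightEnum_concatCode {H : β → Finset (κ → α)} (hH : Pairwise (Disjoint on H))
    (C : Finset (ι → β)) (X Y : R) :
    weightEnum (concatCode H C) X Y = ∑ x ∈ C, ∏ i, weightEnum (H (x i)) X Y := by
  rw [weightEnum, concatCode, sum_biUnion]
  · exact sum_congr rfl fun x _ => weightEnum_prodCode _ X Y
  · intro x _ y _ hxy
    obtain ⟨i, hi⟩ := Function.ne_iff.mp hxy
    refine disjoint_left.mpr fun u hux huy => ?_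
    exact disjoint_left.mp (hH hi) (mem_prodCode.mp hux i) (mem_prodCode.mp huy i)

end WeightEnumerator

theorem ZMod.eq_zero_or_eq_one (t : ZMod 2) : t = 0 ∨ t = 1 := by
  revert t; decide

theorem ZMod.sum_univ_two {M : Type*} [AddCommMonoid M] (f : ZMod 2 → M) :
    ∑ t, f t = f 0 + f 1 :=
  Fin.sum_univ_two f

section Walsh

variable {κ K : Type*} [Fintype κ] [CommRing K]

def walsh (a u : κ → ZMod 2) : K := ∏ l, (-1) ^ (a l * u l).val

theorem ZMod.neg_one_pow_val_add (s t : ZMod 2) :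
    (-1 : K) ^ (s + t).val = (-1) ^ s.val * (-1) ^ t.val := by
  rw [ZMod.val_add, ← neg_one_pow_eq_pow_mod_two, pow_add]

theorem ZMod.neg_one_pow_val (t : ZMod 2) : (-1 : K) ^ t.val = if t = 0 then 1 else -1 := by
  rcases ZMod.eq_zero_or_eq_one t with rfl | rfl <;> simp [ZMod.val_one]

theorem ZMod.sum_neg_one_pow_val (a : κ → ZMod 2) :
    ∑ l, (-1 : K) ^ (a l).val = Fintype.card κ - 2 * hammingNorm a := by
  have h : ∀ l, (-1 : K) ^ (a l).val = 1 - 2 * if a l ≠ 0 then 1 else 0 := by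
    intro l
    rcases ZMod.eq_zero_or_eq_one (a l) with h | h <;> norm_num [h, ZMod.val_one]
  rw [sum_congr rfl fun l _ => h l, sum_sub_distrib, ← mul_sum, sum_boole]
  simp [hammingNorm]

theorem walsh_add_right (a u v : κ → ZMod 2) :
    walsh a (u + v) = (walsh a u * walsh a v : K) := by
  simp only [walsh, Pi.add_apply, mul_add, ZMod.neg_one_pow_val_add, prod_mul_distrib]

theorem walsh_zero_left (u : κ → ZMod 2) : walsh 0 u = (1 : K) := by
  simp [walsh]

theorem walsh_one_left (u : κ → ZMod 2) : walsh 1 u = ((-1) ^ hammingNorm u : K) := by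
  simp only [walsh, Pi.one_apply, one_mul, ZMod.neg_one_pow_val, prod_ite_eq_zero_eq_pow_mul_pow,
    one_pow]

theorem walsh_single_right [DecidableEq κ] (a : κ → ZMod 2) (j : κ) (t : ZMod 2) :
    walsh a (Pi.single j t) = ((-1) ^ (a j * t).val : K) := by
  rw [walsh, prod_eq_single j (fun l _ hl => by simp [hl]) (by simp), Pi.single_eq_same]

variable [DecidableEq κ]

theorem sum_walsh_eq_zero {a : κ → ZMod 2} (ha : a ≠ 0) : ∑ u, walsh a u = (0 : K) := by
  obtain ⟨l, hl⟩ := Function.ne_iff.mp ha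
  simp only [walsh]
  rw [← Fintype.prod_sum fun l t => (-1 : K) ^ (a l * t).val]
  refine prod_eq_zero (mem_univ l) ?_
  simp [ZMod.sum_univ_two, (ZMod.eq_zero_or_eq_one (a l)).resolve_left hl, ZMod.val_one]

theorem sum_walsh_mul_pow (u : κ → ZMod 2) (X Y : K) :
    ∑ a, walsh a u * ((X + Y) ^ (Fintype.card κ - hammingNorm a) * (X - Y) ^ hammingNorm a)
      = 2 ^ Fintype.card κ * (X ^ (Fintype.card κ - hammingNorm u) * Y ^ hammingNorm u) := by
  have hfactor : ∀ s : ZMod 2,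
      ∑ t : ZMod 2, (-1) ^ (t * s).val * (if t = 0 then X + Y else X - Y)
        = 2 * if s = 0 then X else Y := by
    intro s
    rcases ZMod.eq_zero_or_eq_one s with rfl | rfl <;>
      simp [ZMod.sum_univ_two, ZMod.val_one] <;> ring
  simp only [← prod_ite_eq_zero_eq_pow_mul_pow, walsh, ← prod_mul_distrib]
  rw [← Fintype.prod_sum fun l t => (-1 : K) ^ (t * u l).val * (if t = 0 then X + Y else X - Y),
    prod_congr rfl fun l _ => hfactor (u l), prod_mul_distrib, prod_const, card_univ]

end Walsh

section Hamming

variable {κ α : Type*} [Fintype κ] [DecidableEq α]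

theorem hammingNorm_add_le [AddZeroClass α] (x y : κ → α) :
    hammingNorm (x + y) ≤ hammingNorm x + hammingNorm y := by
  classical
  refine (card_le_card fun l hl => ?_).trans (card_union_le _ _)
  simp only [mem_filter, mem_univ, true_and, mem_union, Pi.add_apply] at hl ⊢
  by_contra! h
  exact hl (by rw [h.1, h.2, add_zero])

theorem hammingNorm_single_le [DecidableEq κ] [Zero α] (i : κ) (a : α) :
    hammingNorm (Pi.single i a : κ → α) ≤ 1 := by
  refine (card_le_card fun l hl => ?_).trans (card_singleton i).le
  simp only [mem_filter, mem_univ, true_and] at hl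
  exact mem_singleton.mpr (by_contra fun h => hl (by simp [h]))

end Hamming

section PunctureShift

variable {κ : Type*} [DecidableEq κ]

/-- As `p` varies, `c + punctureShift i p` runs once through the vectors that differ from `c` in
at most one coordinate other than `i`. -/
def punctureShift (i : κ) (p : ZMod 2 × κ) : κ → ZMod 2 :=
  Pi.single i p.1 + Pi.single p.2 1

theorem punctureShift_injective (i : κ) : Injective (punctureShift i) := by
  rintro ⟨s, j⟩ ⟨s', j'⟩ h
  have hj : j = j' := by
    by_contra hne
    by_cases hji : j = i
    · subst hji
      have := congrFun h j'
      simp [punctureShift, Ne.symm hne] at this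
    · have := congrFun h j
      simp [punctureShift, hji, hne] at this
  subst hj
  have := congrFun h i
  simp only [punctureShift, Pi.add_apply, Pi.single_eq_same, add_left_inj] at this
  rw [this]

theorem hammingNorm_punctureShift_add_le [Fintype κ] (i : κ) (p q : ZMod 2 × κ) :
    hammingNorm (punctureShift i p + punctureShift i q) ≤ 3 := by
  have h : punctureShift i p + punctureShift i q
      = Pi.single i (p.1 + q.1) + Pi.single p.2 1 + Pi.single q.2 1 := by
    simp only [punctureShift, Pi.single_add]
    abel
  rw [h]
  refine (hammingNorm_add_le _ _).trans ?_
  have := (hammingNorm_add_le _ _).trans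
    (add_le_add (hammingNorm_single_le i (p.1 + q.1)) (hammingNorm_single_le p.2 (1 : ZMod 2)))
  linarith [hammingNorm_single_le q.2 (1 : ZMod 2)]

theorem sum_walsh_punctureShift {K : Type*} [Fintype κ] [CommRing K] {a : κ → ZMod 2} {i : κ}
    (hai : a i = 0) :
    ∑ p, walsh a (punctureShift i p) = (2 * (Fintype.card κ - 2 * hammingNorm a) : K) := by
  simp only [punctureShift, walsh_add_right, walsh_single_right, hai, zero_mul, ZMod.val_zero,
    pow_zero, one_mul, mul_one]
  rw [Fintype.sum_prod_type]
  simp only [ZMod.sum_neg_one_pow_val, sum_const, card_univ, ZMod.card, nsmul_eq_mul,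
    Nat.cast_ofNat]

end PunctureShift

section ExtendedPerfect

variable {κ K : Type*} [Fintype κ]

structure IsExtendedPerfect (S : Finset (κ → ZMod 2)) : Prop where
  card_mul : #S * (2 * Fintype.card κ) = 2 ^ Fintype.card κ
  four_le_hammingDist : ∀ u ∈ S, ∀ v ∈ S, u ≠ v → 4 ≤ hammingDist u v

namespace IsExtendedPerfect

variable {S : Finset (κ → ZMod 2)}

theorem card_pos (hS : IsExtendedPerfect S) : 0 < Fintype.card κ := by
  by_contra! h
  have := hS.card_mul
  simp_all

variable [DecidableEq κ]

theorem injOn_add_punctureShift (hS : IsExtendedPerfect S) (i : κ) :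
    Set.InjOn (fun x : (κ → ZMod 2) × (ZMod 2 × κ) => x.1 + punctureShift i x.2)
      (S ×ˢ (univ : Finset (ZMod 2 × κ)) : Finset _) := by
  rintro ⟨c, p⟩ hc ⟨c', q⟩ hc' h
  simp only [coe_product, coe_univ, Set.mem_prod, mem_coe, Set.mem_univ, and_true] at hc hc' h
  have hcc' : c = c' := by
    by_contra hne
    have hsub : -c + c' = punctureShift i p + punctureShift i q := by
      funext l
      have hl := congrFun h l
      simp only [Pi.add_apply] at hl
      rw [Pi.add_apply, Pi.add_apply, Pi.neg_apply, ← CharTwo.sub_eq_add (punctureShift i p l)]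
      linear_combination -hl
    have := hS.four_le_hammingDist c hc c' hc' hne
    rw [hammingDist_eq_hammingNorm, hsub] at this
    linarith [hammingNorm_punctureShift_add_le i p q]
  subst hcc'
  rw [punctureShift_injective i (add_left_cancel h)]

theorem sum_univ_eq_sum_add_punctureShift {M : Type*} [AddCommMonoid M] (hS : IsExtendedPerfect S) (i : κ)
    (f : (κ → ZMod 2) → M) : ∑ u, f u = ∑ c ∈ S, ∑ p, f (c + punctureShift i p) := by
  have hinj := hS.injOn_add_punctureShift i
  have himage : (S ×ˢ univ).image (fun x => x.1 + punctureShift i x.2) = univ := by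
    apply eq_univ_of_card
    rw [card_image_of_injOn hinj, card_product, card_univ, Fintype.card_prod, ZMod.card,
      Fintype.card_fun, ZMod.card, hS.card_mul]
  rw [← himage, sum_image hinj, sum_product]

variable [Field K] [CharZero K]

theorem sum_walsh_eq_zero (hS : IsExtendedPerfect S) {a : κ → ZMod 2} (ha : a ≠ 0) {i : κ}
    (hai : a i = 0) (hwt : 2 * hammingNorm a ≠ Fintype.card κ) : ∑ c ∈ S, walsh a c = (0 : K) := by
  have h := hS.sum_univ_eq_sum_add_punctureShift i (walsh a : _ → K)
  simp only [_root_.sum_walsh_eq_zero ha, walsh_add_right, ← mul_sum,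
    sum_walsh_punctureShift hai, ← sum_mul] at h
  refine (mul_eq_zero.mp h.symm).resolve_right (mul_ne_zero two_ne_zero (sub_ne_zero.mpr ?_))
  exact_mod_cast (Ne.symm hwt)

theorem exists_two_pow_mul_weightEnum (hS : IsExtendedPerfect S) {p : ℕ}
    (hpar : ∀ u ∈ S, hammingNorm u % 2 = p % 2) :
    ∃ T : K, ∀ X Y : K, 2 ^ Fintype.card κ * weightEnum S X Y
      = #S * ((X + Y) ^ Fintype.card κ + (-1) ^ p * (X - Y) ^ Fintype.card κ)
        + T * ((X + Y) ^ (Fintype.card κ - Fintype.card κ / 2)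
          * (X - Y) ^ (Fintype.card κ / 2)) := by
  set N := Fintype.card κ
  set E := univ.filter fun a : κ → ZMod 2 => 2 * hammingNorm a = N
  refine ⟨∑ a ∈ E, ∑ c ∈ S, walsh a c, fun X Y => ?_⟩
  set F : (κ → ZMod 2) → K := fun a =>
    (∑ c ∈ S, walsh a c) * ((X + Y) ^ (N - hammingNorm a) * (X - Y) ^ hammingNorm a)
  have hsum : 2 ^ N * weightEnum S X Y = ∑ a, F a := by
    rw [weightEnum, mul_sum, sum_congr rfl fun c _ => (sum_walsh_mul_pow c X Y).symm, sum_comm]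
    simp only [F, sum_mul]
    rfl
  have hnorm_one : hammingNorm (1 : κ → ZMod 2) = N := by
    simp [hammingNorm, N]
  have h0E : 0 ∉ E := by
    simp only [E, mem_filter, hammingNorm_zero]
    have := hS.card_pos
    omega
  have h1E : 1 ∉ E := by
    simp only [E, mem_filter, hnorm_one]
    have := hS.card_pos
    omega
  have h01 : (0 : κ → ZMod 2) ∉ insert 1 E := by
    rw [mem_insert, not_or]
    refine ⟨fun h => ?_, h0E⟩
    have := congrArg hammingNorm h
    rw [hammingNorm_zero, hnorm_one] at this
    exact hS.card_pos.ne this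
  have hvanish : ∀ a ∉ insert 0 (insert 1 E), F a = 0 := by
    intro a ha
    simp only [mem_insert, not_or, E, mem_filter, mem_univ, true_and] at ha
    obtain ⟨ha0, ha1, hwt⟩ := ha
    obtain ⟨i, hi⟩ := Function.ne_iff.mp ha1
    simp only [F, hS.sum_walsh_eq_zero ha0 ((ZMod.eq_zero_or_eq_one (a i)).resolve_right hi) hwt,
      zero_mul]
  have hF0 : F 0 = #S * (X + Y) ^ N := by
    simp [F, walsh_zero_left]
  have hF1 : F 1 = #S * ((-1) ^ p * (X - Y) ^ N) := by
    have hsign : ∀ c ∈ S, walsh 1 c = ((-1) ^ p : K) := fun c hc => by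
      rw [walsh_one_left, neg_one_pow_eq_pow_mod_two, hpar c hc, ← neg_one_pow_eq_pow_mod_two]
    simp only [F, sum_congr rfl hsign, hnorm_one, sum_const, nsmul_eq_mul, Nat.sub_self, pow_zero,
      one_mul, mul_assoc]
  have hFE : ∑ a ∈ E, F a = (∑ a ∈ E, ∑ c ∈ S, walsh a c)
      * ((X + Y) ^ (N - N / 2) * (X - Y) ^ (N / 2)) := by
    rw [sum_mul]
    refine sum_congr rfl fun a ha => ?_
    have : hammingNorm a = N / 2 := by
      rw [mem_filter] at ha
      omega
    simp only [F, this]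
  rw [hsum, ← sum_subset (subset_univ _) fun a _ ha => hvanish a ha, sum_insert h01,
    sum_insert h1E, hF0, hF1, hFE]
  ring

theorem weightEnum_eq {S' : Finset (κ → ZMod 2)} (hS : IsExtendedPerfect S)
    (hS' : IsExtendedPerfect S') {p : ℕ} (hpar : ∀ u ∈ S, hammingNorm u % 2 = p % 2)
    (hpar' : ∀ u ∈ S', hammingNorm u % 2 = p % 2) (h0 : 0 ∉ S) (h0' : 0 ∉ S') (X Y : K) :
    weightEnum S X Y = weightEnum S' X Y := by
  obtain ⟨T, hT⟩ := hS.exists_two_pow_mul_weightEnum (K := K) hpar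
  obtain ⟨T', hT'⟩ := hS'.exists_two_pow_mul_weightEnum (K := K) hpar'
  have hcard : #S = #S' :=
    Nat.eq_of_mul_eq_mul_right (by linarith [hS.card_pos]) (hS.card_mul.trans hS'.card_mul.symm)
  have hTT' : T = T' := by
    have h := hT 1 0
    have h' := hT' 1 0
    simp only [weightEnum_one_zero h0, weightEnum_one_zero h0', add_zero, sub_zero, one_pow,
      mul_one, mul_zero, hcard] at h h'
    linear_combination h' - h
  apply mul_left_cancel₀ (pow_ne_zero (Fintype.card κ) (two_ne_zero' K))
  rw [hT, hT', hcard, hTT']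

end IsExtendedPerfect

end ExtendedPerfect

theorem two_mul_two_pow_dvd (t : ℕ) : 2 * 2 ^ t ∣ 2 ^ 2 ^ t := by
  rw [← pow_succ']
  exact pow_dvd_pow 2 Nat.lt_two_pow_self

theorem weightEnum_eq_ite_zero_odd {κ K : Type*} [Fintype κ] [DecidableEq κ] [Field K] [CharZero K]
    {N : ℕ} [NeZero N] {H : ZMod N → Finset (κ → ZMod 2)} (hperf : ∀ j, IsExtendedPerfect (H j))
    (hzero : ∀ j ≠ 0, 0 ∉ H j) (hpar : ∀ j, ∀ u ∈ H j, hammingNorm u % 2 = j.val % 2)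
    (j : ZMod N) (X Y : K) :
    weightEnum (H j) X Y = if j = 0 then weightEnum (H 0) X Y
      else if Odd j.val then weightEnum (H 1) X Y else weightEnum (H 2) X Y := by
  have hj_lt := ZMod.val_lt j
  split_ifs with hj hodd
  · rw [hj]
  · have h1 : (1 : ZMod N).val = 1 := ZMod.val_one'' (by have := hodd.pos; omega)
    have h1ne : (1 : ZMod N) ≠ 0 := fun h => by simp [h] at h1
    refine (hperf j).weightEnum_eq (hperf 1) (p := 1) (fun u hu => ?_) (fun u hu => ?_)
      (hzero j hj) (hzero 1 h1ne) X Y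
    · rw [hpar j u hu, Nat.odd_iff.mp hodd]
    · rw [hpar 1 u hu, h1]
  · have hj0 : j.val ≠ 0 := (ZMod.val_ne_zero j).mpr hj
    have h2N : 2 < N := by
      rw [Nat.not_odd_iff] at hodd
      omega
    have h2 : (2 : ZMod N).val = 2 := ZMod.val_ofNat_of_lt h2N
    have h2ne : (2 : ZMod N) ≠ 0 := fun h => by simp [h] at h2
    refine (hperf j).weightEnum_eq (hperf 2) (p := 0) (fun u hu => ?_) (fun u hu => ?_)
      (hzero j hj) (hzero 2 h2ne) X Y
    · rw [hpar j u hu, Nat.not_odd_iff.mp hodd]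
    · rw [hpar 2 u hu, h2]

theorem stmt_13_general (k n : ℕ)
    (H : ZMod (2 ^ k) → Finset (Fin (2 ^ (k - 1)) → ZMod 2))
    (hpart : ∀ u : Fin (2 ^ (k - 1)) → ZMod 2, ∃! j, u ∈ H j)
    (hcard : ∀ j, (H j).card = 2 ^ (2 ^ (k - 1)) / (2 * 2 ^ (k - 1)))
    (hdist4 : ∀ j, ∀ u ∈ H j, ∀ v ∈ H j, u ≠ v → 4 ≤ hammingDist u v)
    (hzero : (0 : Fin (2 ^ (k - 1)) → ZMod 2) ∈ H 0)
    (hparity : ∀ j, ∀ u ∈ H j, hammingNorm u % 2 = (ZMod.val j) % 2)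
    (C : Finset (Fin n → ZMod (2 ^ k))) :
    ∀ X Y : ℝ,
      (∑ᶠ u ∈ {u : Fin n × Fin (2 ^ (k - 1)) → ZMod 2 |
            ∃ x ∈ C, ∀ i, (fun j => u (i, j)) ∈ H (x i)},
          X ^ (n * 2 ^ (k - 1) - hammingNorm u) * Y ^ (hammingNorm u))
        = ∑ z ∈ C, ∏ i,
            (if z i = 0 then
              ∑ c ∈ H 0, X ^ (2 ^ (k - 1) - hammingNorm c) * Y ^ (hammingNorm c)
            else if Odd (z i).val then
              ∑ c ∈ H 1, X ^ (2 ^ (k - 1) - hammingNorm c) * Y ^ (hammingNorm c)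
            else
              ∑ c ∈ H 2, X ^ (2 ^ (k - 1) - hammingNorm c) * Y ^ (hammingNorm c)) := by
  intro X Y
  have hperf : ∀ j, IsExtendedPerfect (H j) := fun j =>
    ⟨by rw [hcard j, Fintype.card_fin]; exact Nat.div_mul_cancel (two_mul_two_pow_dvd _),
      hdist4 j⟩
  have hzero_not_mem : ∀ j ≠ 0, (0 : Fin (2 ^ (k - 1)) → ZMod 2) ∉ H j :=
    fun j hj h0 => hj ((hpart 0).unique h0 hzero)
  have hdisj : Pairwise (Disjoint on H) := fun j j' hjj' =>
    disjoint_left.mpr fun u hu hu' => hjj' ((hpart u).unique hu hu')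
  rw [← coe_concatCode, finsum_mem_coe_finset]
  calc _ = weightEnum (concatCode H C) X Y := by simp [weightEnum]
    _ = ∑ x ∈ C, ∏ i, weightEnum (H (x i)) X Y := weightEnum_concatCode hdisj C X Y
    _ = _ := by
      refine sum_congr rfl fun x _ => prod_congr rfl fun i _ => ?_
      rw [weightEnum_eq_ite_zero_odd hperf hzero_not_mem hparity (x i)]
      simp only [weightEnum, Fintype.card_fin]

/-- For `𝒞 ⊆ Z_{2^k}^n` and `C̃ = Φ(𝒞)`, the weight enumerator of `C̃` equals the
symmetrized weight enumerator of `𝒞` evaluated at the weight enumerators of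
`H_0`, `H_1`, `H_2`:
`W_{C̃}(X,Y) = SW_𝒞(W_{H_0}(X,Y), W_{H_1}(X,Y), W_{H_2}(X,Y))`,
where the symbol `0` gets `W_{H_0}`, odd symbols get `W_{H_1}` and nonzero even
symbols get `W_{H_2}`. Here `m = 2^{k-1}` and `{H_j}` is a partition of `Z_2^m` into
extended 1-perfect codes with `0 ∈ H_0` and weight parity of `H_j` equal to the
parity of `j`. -/
theorem stmt_13 (k n : ℕ) (hk : 2 ≤ k)
    (H : ZMod (2 ^ k) → Finset (Fin (2 ^ (k - 1)) → ZMod 2))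
    (hpart : ∀ u : Fin (2 ^ (k - 1)) → ZMod 2, ∃! j, u ∈ H j)
    (hcard : ∀ j, (H j).card = 2 ^ (2 ^ (k - 1)) / (2 * 2 ^ (k - 1)))
    (hdist4 : ∀ j, ∀ u ∈ H j, ∀ v ∈ H j, u ≠ v → 4 ≤ hammingDist u v)
    (hzero : (0 : Fin (2 ^ (k - 1)) → ZMod 2) ∈ H 0)
    (hparity : ∀ j, ∀ u ∈ H j, hammingNorm u % 2 = (ZMod.val j) % 2)
    (C : Finset (Fin n → ZMod (2 ^ k))) :
    ∀ X Y : ℝ,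
      (∑ᶠ u ∈ {u : Fin n × Fin (2 ^ (k - 1)) → ZMod 2 |
            ∃ x ∈ C, ∀ i, (fun j => u (i, j)) ∈ H (x i)},
          X ^ (n * 2 ^ (k - 1) - hammingNorm u) * Y ^ (hammingNorm u))
        = ∑ z ∈ C, ∏ i,
            (if z i = 0 then
              ∑ c ∈ H 0, X ^ (2 ^ (k - 1) - hammingNorm c) * Y ^ (hammingNorm c)
            else if Odd (z i).val then
              ∑ c ∈ H 1, X ^ (2 ^ (k - 1) - hammingNorm c) * Y ^ (hammingNorm c)
            else
              ∑ c ∈ H 2, X ^ (2 ^ (k - 1) - hammingNorm c) * Y ^ (hammingNorm c)) :=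
  stmt_13_general k n H hpart hcard hdist4 hzero hparity C
end

section
/- Let k ≥ 2 and n = 2^r. The co-Z_{2^k}-linear code H̃_I = Φ(H_I) is a binary (nm, 2^{nm}/(2nm), 4) code with m = 2^{k-1}, i.e., an extended 1-perfect binary code of length n·2^{k-1}. -/
/-!
`Φ(H_I)` is the disjoint union, over `x ∈ H_I`, of the products `∏ i, H_{x_i}`, each factor of
size `2^(m-k)`. The syndrome map `h ↦ B_I hᵀ` is onto the span of the columns of `B_I`, that is
onto `Z_{2^k} × ∏ j, (2^{k-1-j} Z_{2^k})^{i_{j+1}}`, of size `2^(k+r)`; hence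
`|H_I| = 2^(kn) / 2^(k+r)` and `|Φ(H_I)| = 2^(nm) / 2^(k+r)`.

Two words of `Φ(H_I)` over the same `x` differ inside one block, where `H_j` has distance 4.
Over `x ≠ y`, block `i` contributes at least `wt^◇(y_i - x_i)` bits: distinct blocks are
disjoint, and by the parity condition the distance is even when `y_i - x_i` is even. It remains
that `d^◇(x, y) ≥ 4` on `H_I`: the all-ones row of `B_I` makes every weight even, and a codeword
of weight 2 would have a single nonzero entry, contradicting the all-ones row, or two opposite
odd (hence unit) entries, forcing two equal columns.
-/

/-- The weight `wt^◇`. -/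
def wtDia {M : ℕ} (x : ZMod M) : ℕ :=
  if x = 0 then 0 else if Odd x.val then 1 else 2

/-- The induced distance `d^◇`. -/
def dDia {M : ℕ} (n : ℕ) (x y : Fin n → ZMod M) : ℕ :=
  ∑ i, wtDia (y i - x i)

/-- Index type for the rows of `B_I`: one row of ones, plus `I j` rows in block `j`
(`j = 0, …, k-1`, corresponding to `i_{j+1}` in the paper). -/
def colIdx (k : ℕ) (I : Fin k → ℕ) : Type :=
  Unit ⊕ (Σ j : Fin k, Fin (I j))

instance (k : ℕ) (I : Fin k → ℕ) : Fintype (colIdx k I) := by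
  unfold colIdx; infer_instance

instance (k : ℕ) (I : Fin k → ℕ) : DecidableEq (colIdx k I) := by
  unfold colIdx; infer_instance

/-- The set `{1} × (2^{k-1}Z_{2^k})^{i_1} × (2^{k-2}Z_{2^k})^{i_2} × … × (2^0 Z_{2^k})^{i_k}`
of columns of `B_I`. -/
def colSet (k : ℕ) (I : Fin k → ℕ) : Set (colIdx k I → ZMod (2 ^ k)) :=
  {v | v (Sum.inl ()) = 1 ∧
    ∀ (j : Fin k) (t : Fin (I j)),
      ∃ c : ZMod (2 ^ k), v (Sum.inr ⟨j, t⟩) = (2 ^ (k - 1 - j.val) : ZMod (2 ^ k)) * c}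

/-- The linear code `H_I = {h | B_I hᵀ = 0}` with parity-check matrix `B_I`,
whose columns are `b 0, …, b (n-1)`. -/
def kerCode (k n : ℕ) {ι : Type} [Fintype ι]
    (b : Fin n → ι → ZMod (2 ^ k)) : Set (Fin n → ZMod (2 ^ k)) :=
  {h | ∀ t : ι, ∑ i, h i * b i t = 0}

open Function

lemma wtDia_eq_zero_iff {M : ℕ} {x : ZMod M} : wtDia x = 0 ↔ x = 0 := by
  unfold wtDia; split_ifs <;> simp_all

lemma wtDia_le_two {M : ℕ} (x : ZMod M) : wtDia x ≤ 2 := by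
  unfold wtDia; split_ifs <;> omega

lemma natCast_wtDia {M : ℕ} [NeZero M] (hM : 2 ∣ M) (x : ZMod M) :
    (wtDia x : ZMod 2) = ZMod.castHom hM (ZMod 2) x := by
  rw [ZMod.castHom_apply, ← ZMod.natCast_val, ZMod.natCast_eq_natCast_iff']
  unfold wtDia
  split_ifs with h0 hodd
  · simp [h0]
  · exact (Nat.odd_iff.mp hodd).symm
  · exact (Nat.not_odd_iff.mp hodd).symm

lemma isUnit_of_wtDia_eq_one {k : ℕ} {x : ZMod (2 ^ k)} (h : wtDia x = 1) : IsUnit x := by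
  have hodd : Odd x.val := by
    unfold wtDia at h; split_ifs at h with h0 hodd <;> simp_all
  rw [← ZMod.natCast_zmod_val x, ZMod.isUnit_iff_coprime]
  exact Nat.Coprime.pow_right _ hodd.coprime_two_right

lemma natCast_hammingNorm {ι : Type*} [Fintype ι] (x : ι → ZMod 2) :
    (hammingNorm x : ZMod 2) = ∑ i, x i := by
  classical
  rw [hammingNorm, Finset.card_filter, Nat.cast_sum]
  refine Finset.sum_congr rfl fun i _ => ?_
  generalize x i = a
  revert a; decide

lemma hammingDist_eq_sum_hammingDist_rows {ι κ β : Type*} [Fintype ι] [Fintype κ]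
    [DecidableEq β] (u v : ι × κ → β) :
    hammingDist u v = ∑ i, hammingDist (fun j => u (i, j)) (fun j => v (i, j)) := by
  simp only [hammingDist, Finset.card_filter, Fintype.sum_prod_type]

lemma hammingNorm_le_sum_wtDia {n M : ℕ} (h : Fin n → ZMod M) :
    hammingNorm h ≤ ∑ i, wtDia (h i) := by
  rw [hammingNorm, Finset.card_filter]
  refine Finset.sum_le_sum fun i _ => ?_
  split_ifs with h0
  · exact Nat.one_le_iff_ne_zero.mpr (wtDia_eq_zero_iff.not.mpr h0)
  · exact Nat.zero_le _

lemma exists_of_hammingNorm_eq_one {ι β : Type*} [Fintype ι] [Zero β] [DecidableEq β]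
    {x : ι → β} (hx : hammingNorm x = 1) : ∃ i, x i ≠ 0 ∧ ∀ j ≠ i, x j = 0 := by
  obtain ⟨i, hi⟩ := Finset.card_eq_one.mp hx
  refine ⟨i, ?_, fun j hj => ?_⟩
  · simpa using hi.ge (Finset.mem_singleton_self i)
  · by_contra h0
    exact hj (Finset.mem_singleton.mp (hi ▸ Finset.mem_filter.mpr ⟨Finset.mem_univ j, h0⟩))

lemma exists_of_hammingNorm_eq_two {ι β : Type*} [Fintype ι] [Zero β] [DecidableEq β]
    {x : ι → β} (hx : hammingNorm x = 2) :
    ∃ i j, i ≠ j ∧ x i ≠ 0 ∧ x j ≠ 0 ∧ ∀ l, l ≠ i ∧ l ≠ j → x l = 0 := by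
  classical
  obtain ⟨i, j, hij, hs⟩ := Finset.card_eq_two.mp hx
  refine ⟨i, j, hij, ?_, ?_, fun l hl => ?_⟩
  · simpa using hs.ge (by simp)
  · simpa using hs.ge (by simp)
  · by_contra h0
    have : l ∈ ({i, j} : Finset ι) := hs ▸ Finset.mem_filter.mpr ⟨Finset.mem_univ l, h0⟩
    simp_all

lemma even_sum_wtDia {M n : ℕ} [NeZero M] (hM : 2 ∣ M) {h : Fin n → ZMod M}
    (hsum : ∑ i, h i = 0) : Even (∑ i, wtDia (h i)) := by
  rw [← ZMod.natCast_eq_zero_iff_even, Nat.cast_sum]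
  simp only [natCast_wtDia hM]
  rw [← map_sum, hsum, map_zero]

section MinimumDistance

variable {k n : ℕ} {ι : Type} [Fintype ι] {b : Fin n → ι → ZMod (2 ^ k)}

lemma sub_mem_kerCode {x y : Fin n → ZMod (2 ^ k)} (hx : x ∈ kerCode k n b)
    (hy : y ∈ kerCode k n b) : y - x ∈ kerCode k n b := by
  intro t
  simp only [Pi.sub_apply, sub_mul, Finset.sum_sub_distrib, hx t, hy t, sub_zero]

lemma sum_eq_zero_of_mem_kerCode {t₀ : ι} (hone : ∀ i, b i t₀ = 1)
    {h : Fin n → ZMod (2 ^ k)} (hh : h ∈ kerCode k n b) : ∑ i, h i = 0 := by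
  simpa [hone] using hh t₀

lemma eq_of_mem_kerCode_of_support_pair {h : Fin n → ZMod (2 ^ k)} (hh : h ∈ kerCode k n b)
    {i j : Fin n} (hij : i ≠ j) (hsupp : ∀ l, l ≠ i ∧ l ≠ j → h l = 0)
    (hunit : IsUnit (h i)) (hsum : h i + h j = 0) : b i = b j := by
  funext t
  have hcol := hh t
  rw [Fintype.sum_eq_add i j hij fun l hl => by simp [hsupp l hl],
    eq_neg_of_add_eq_zero_right hsum] at hcol
  have hdiff : h i * (b i t - b j t) = 0 := by linear_combination hcol
  exact sub_eq_zero.mp (hunit.mul_right_eq_zero.mp hdiff)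

theorem four_le_sum_wtDia_of_mem_kerCode (hk : k ≠ 0) (hb : Injective b) {t₀ : ι}
    (hone : ∀ i, b i t₀ = 1) {h : Fin n → ZMod (2 ^ k)} (hh : h ∈ kerCode k n b)
    (hne : h ≠ 0) : 4 ≤ ∑ i, wtDia (h i) := by
  classical
  have hsum := sum_eq_zero_of_mem_kerCode hone hh
  have heven := even_sum_wtDia (dvd_pow_self 2 hk) hsum
  have hpos := hammingNorm_pos_iff.mpr hne
  have hle := hammingNorm_le_sum_wtDia h
  by_contra! hlt
  have hW : ∑ i, wtDia (h i) = 2 := by obtain ⟨m, hm⟩ := heven; omega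
  rcases (show hammingNorm h = 1 ∨ hammingNorm h = 2 by omega) with h1 | h2
  · obtain ⟨i, hi, hzero⟩ := exists_of_hammingNorm_eq_one h1
    exact hi (by rwa [Fintype.sum_eq_single i hzero] at hsum)
  · obtain ⟨i, j, hij, hi, hj, hzero⟩ := exists_of_hammingNorm_eq_two h2
    have hwt : wtDia (h i) + wtDia (h j) = 2 := by
      rwa [Fintype.sum_eq_add i j hij fun l hl => by simp [hzero l hl, wtDia]] at hW
    have hwi : wtDia (h i) = 1 := by
      have := wtDia_eq_zero_iff.not.mpr hi
      have := wtDia_eq_zero_iff.not.mpr hj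
      omega
    refine hij (hb (eq_of_mem_kerCode_of_support_pair hh hij hzero
      (isUnit_of_wtDia_eq_one hwi) ?_))
    rwa [Fintype.sum_eq_add i j hij hzero] at hsum

theorem four_le_dDia_of_mem_kerCode (hk : k ≠ 0) (hb : Injective b) {t₀ : ι}
    (hone : ∀ i, b i t₀ = 1) {x y : Fin n → ZMod (2 ^ k)} (hx : x ∈ kerCode k n b)
    (hy : y ∈ kerCode k n b) (hxy : x ≠ y) : 4 ≤ dDia n x y :=
  four_le_sum_wtDia_of_mem_kerCode hk hb hone (sub_mem_kerCode hx hy)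
    (sub_ne_zero.mpr hxy.symm)

end MinimumDistance

lemma natCard_dvd_two_pow {k a : ℕ} (ha : a ≤ k) :
    Nat.card {x : ZMod (2 ^ k) // 2 ^ a ∣ x} = 2 ^ (k - a) := by
  have hmem : ∀ x : ZMod (2 ^ k),
      2 ^ a ∣ x ↔ x ∈ AddSubgroup.zmultiples ((2 ^ a : ℕ) : ZMod (2 ^ k)) := by
    intro x
    rw [AddSubgroup.mem_zmultiples_iff]
    constructor
    · rintro ⟨c, rfl⟩
      exact ⟨c.cast, by rw [zsmul_eq_mul, ZMod.intCast_zmod_cast]; push_cast; ring⟩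
    · rintro ⟨z, rfl⟩
      exact ⟨z, by rw [zsmul_eq_mul]; push_cast; ring⟩
  rw [Nat.card_congr (Equiv.subtypeEquivRight hmem), Nat.card_zmultiples,
    ZMod.addOrderOf_coe _ (by positivity), Nat.gcd_eq_right (pow_dvd_pow 2 ha),
    Nat.pow_div ha two_pos]

section KernelSize

variable {k : ℕ} {I : Fin k → ℕ}

variable (k I) in
def colExp : colIdx k I → ℕ
  | Sum.inl _ => 0
  | Sum.inr p => k - 1 - p.1

variable (k I) in
def colSpan : Submodule (ZMod (2 ^ k)) (colIdx k I → ZMod (2 ^ k)) :=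
  Submodule.pi Set.univ fun t => Ideal.span {2 ^ colExp k I t}

lemma mem_colSpan {w : colIdx k I → ZMod (2 ^ k)} :
    w ∈ colSpan k I ↔ ∀ t, 2 ^ colExp k I t ∣ w t := by
  simp [colSpan, Submodule.mem_pi, Ideal.mem_span_singleton]

lemma colSet_subset_colSpan : colSet k I ⊆ colSpan k I := by
  rintro v ⟨-, hv⟩
  rw [SetLike.mem_coe, mem_colSpan]
  rintro (_ | ⟨j, t⟩)
  · simp [colExp]
  · exact hv j t

lemma span_colSet : Submodule.span (ZMod (2 ^ k)) (colSet k I) = colSpan k I := by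
  refine le_antisymm (Submodule.span_le.mpr colSet_subset_colSpan) fun w hw => ?_
  let e : colIdx k I → ZMod (2 ^ k) := Sum.elim (fun _ => 1) 0
  let v : colIdx k I → ZMod (2 ^ k) := Sum.elim (fun _ => 1) fun p => w (Sum.inr p)
  have he : e ∈ colSet k I := ⟨rfl, fun _ _ => ⟨0, by simp [e]⟩⟩
  have hv : v ∈ colSet k I := ⟨rfl, fun j t => mem_colSpan.mp hw (Sum.inr ⟨j, t⟩)⟩
  have hdecomp : w = v + (w (Sum.inl ()) - 1) • e := by
    funext t
    rcases t with (⟨⟩ | p)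
    · show w (Sum.inl ()) = 1 + (w (Sum.inl ()) - 1) * 1
      ring
    · show w (Sum.inr p) = w (Sum.inr p) + (w (Sum.inl ()) - 1) * 0
      ring
  rw [hdecomp]
  exact add_mem (Submodule.subset_span hv) (Submodule.smul_mem _ _ (Submodule.subset_span he))

lemma natCard_colSpan : Nat.card (colSpan k I) = 2 ^ (k + ∑ j, (j.val + 1) * I j) := by
  let e : colSpan k I ≃ ∀ t, {x : ZMod (2 ^ k) // 2 ^ colExp k I t ∣ x} :=
    (Equiv.subtypeEquivRight fun _ => mem_colSpan).trans (Equiv.subtypePiEquivPi)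
  have hfactor : ∀ t, Nat.card {x : ZMod (2 ^ k) // 2 ^ colExp k I t ∣ x}
      = 2 ^ (k - colExp k I t) :=
    fun t => natCard_dvd_two_pow (by unfold colExp; split <;> omega)
  have hexp : ∀ j : Fin k, k - (k - 1 - j) = j + 1 := fun j => by omega
  rw [Nat.card_congr e, Nat.card_pi, Fintype.prod_congr _ _ hfactor]
  change ∏ t : Unit ⊕ Σ j : Fin k, Fin (I j), _ = _
  rw [Fintype.prod_sum_type, Fintype.prod_sigma]
  simp only [colExp, hexp, Nat.sub_zero, Finset.prod_const, Finset.card_univ, Fintype.card_unit,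
    Fintype.card_fin, pow_one, ← pow_mul, Finset.prod_pow_eq_pow_sum, ← pow_add]

lemma kerCode_eq_ker {n : ℕ} {ι : Type} [Fintype ι] (b : Fin n → ι → ZMod (2 ^ k)) :
    kerCode k n b = LinearMap.ker (Matrix.of b).vecMulLinear := by
  ext h
  simp [kerCode, funext_iff, Matrix.vecMul, dotProduct]

theorem ncard_kerCode_mul {n : ℕ} {b : Fin n → colIdx k I → ZMod (2 ^ k)}
    (hb : Set.range b = colSet k I) :
    (kerCode k n b).ncard * 2 ^ (k + ∑ j, (j.val + 1) * I j) = 2 ^ (k * n) := by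
  set f := (Matrix.of b).vecMulLinear
  have hrange : LinearMap.range f = colSpan k I := by
    rw [range_vecMulLinear, ← span_colSet, ← hb]
    rfl
  rw [← Nat.card_coe_set_eq, ← natCard_colSpan, ← hrange, kerCode_eq_ker, SetLike.coe_sort_coe,
    ← Nat.card_congr f.quotKerEquivRange.toEquiv,
    ← Submodule.card_eq_card_quotient_mul_card]
  simp [pow_mul]

end KernelSize

/-- The paper's `Φ(K)`, with binary words indexed by `ι × κ`: row `i` encodes the coordinate `x i`. -/
def phiCode {ι α κ β : Type*} (K : Set (ι → α)) (H : α → Finset (κ → β)) : Set (ι × κ → β) :=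
  {u | ∃ x ∈ K, ∀ i, (fun j => u (i, j)) ∈ H (x i)}

theorem ncard_phiCode {ι α κ β : Type*} [Fintype ι] [Finite α] {K : Set (ι → α)}
    {H : α → Finset (κ → β)} (hH : Pairwise (Disjoint on H)) {c : ℕ}
    (hc : ∀ a, (H a).card = c) :
    (phiCode K H).ncard = K.ncard * c ^ Fintype.card ι := by
  have := Fintype.ofFinite K
  let F : (Σ x : K, ∀ i, H (x.1 i)) → phiCode K H :=
    fun a => ⟨fun p => (a.2 p.1).1 p.2, a.1.1, a.1.2, fun i => (a.2 i).2⟩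
  have hF : Bijective F := by
    constructor
    · rintro ⟨⟨x, hx⟩, g⟩ ⟨⟨y, hy⟩, g'⟩ hFeq
      have hrow : ∀ i, (g i).1 = (g' i).1 := fun i =>
        funext fun j => congrFun (congrArg Subtype.val hFeq) (i, j)
      obtain rfl : x = y := funext fun i =>
        hH.eq (Finset.not_disjoint_iff.2 ⟨_, (g i).2, hrow i ▸ (g' i).2⟩)
      obtain rfl : g = g' := funext fun i => Subtype.ext (hrow i)
      rfl
    · rintro ⟨u, x, hx, hu⟩
      exact ⟨⟨⟨x, hx⟩, fun i => ⟨fun j => u (i, j), hu i⟩⟩, rfl⟩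
  rw [← Nat.card_coe_set_eq, ← Nat.card_congr (Equiv.ofBijective F hF), Nat.card_sigma,
    ← Nat.card_coe_set_eq]
  simp only [Nat.card_pi, Nat.card_eq_finsetCard, hc, Finset.prod_const, Finset.card_univ,
    Finset.sum_const, smul_eq_mul, ← Nat.card_eq_fintype_card, Nat.card_coe_set_eq]

lemma natCast_hammingNorm_of_mem {M : ℕ} [NeZero M] (hM : 2 ∣ M) {κ : Type*} [Fintype κ]
    {H : ZMod M → Finset (κ → ZMod 2)}
    (hparity : ∀ j, ∀ u ∈ H j, hammingNorm u % 2 = (ZMod.val j) % 2) {a : ZMod M}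
    {u : κ → ZMod 2} (hu : u ∈ H a) :
    (hammingNorm u : ZMod 2) = ZMod.castHom hM (ZMod 2) a := by
  rw [ZMod.castHom_apply, ← ZMod.natCast_val, ZMod.natCast_eq_natCast_iff']
  exact hparity a u hu

theorem wtDia_sub_le_hammingDist {M : ℕ} [NeZero M] (hM : 2 ∣ M) {κ : Type*} [Fintype κ]
    {H : ZMod M → Finset (κ → ZMod 2)} (hH : Pairwise (Disjoint on H))
    (hparity : ∀ j, ∀ u ∈ H j, hammingNorm u % 2 = (ZMod.val j) % 2) {a c : ZMod M}
    {u v : κ → ZMod 2} (hu : u ∈ H a) (hv : v ∈ H c) :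
    wtDia (c - a) ≤ hammingDist u v := by
  rcases eq_or_ne a c with rfl | hac
  · simp [wtDia]
  have hpos : 0 < hammingDist u v := hammingDist_pos.mpr fun huv =>
    hac (hH.eq (Finset.not_disjoint_iff.2 ⟨v, huv ▸ hu, hv⟩))
  have hmod : (hammingDist u v : ZMod 2) = (wtDia (c - a) : ZMod 2) := by
    rw [natCast_wtDia hM, map_sub, hammingDist_eq_hammingNorm, natCast_hammingNorm]
    simp only [Pi.add_apply, Pi.neg_apply, Finset.sum_add_distrib, Finset.sum_neg_distrib]
    rw [← natCast_hammingNorm u, ← natCast_hammingNorm v,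
      natCast_hammingNorm_of_mem hM hparity hu, natCast_hammingNorm_of_mem hM hparity hv]
    ring
  rw [ZMod.natCast_eq_natCast_iff'] at hmod
  have hne : wtDia (c - a) ≠ 0 := wtDia_eq_zero_iff.not.mpr (sub_ne_zero.mpr hac.symm)
  have := wtDia_le_two (c - a)
  omega

theorem le_hammingDist_of_mem_phiCode {n M : ℕ} {κ β : Type*} [Fintype κ] [DecidableEq β]
    {K : Set (Fin n → ZMod M)} {H : ZMod M → Finset (κ → β)} {d : ℕ}
    (hK : ∀ x ∈ K, ∀ y ∈ K, x ≠ y → d ≤ dDia n x y)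
    (hH : ∀ j, ∀ u ∈ H j, ∀ v ∈ H j, u ≠ v → d ≤ hammingDist u v)
    (hrow : ∀ a c u v, u ∈ H a → v ∈ H c → wtDia (c - a) ≤ hammingDist u v)
    {u v : Fin n × κ → β} (hu : u ∈ phiCode K H) (hv : v ∈ phiCode K H) (huv : u ≠ v) :
    d ≤ hammingDist u v := by
  obtain ⟨x, hx, hux⟩ := hu
  obtain ⟨y, hy, hvy⟩ := hv
  rw [hammingDist_eq_sum_hammingDist_rows]
  rcases eq_or_ne x y with rfl | hxy
  · obtain ⟨⟨i, j⟩, hij⟩ := ne_iff.mp huv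
    have hrow_ne : (fun j => u (i, j)) ≠ (fun j => v (i, j)) := fun h => hij (congrFun h j)
    exact (hH _ _ (hux i) _ (hvy i) hrow_ne).trans
      (Finset.single_le_sum (f := fun i => hammingDist (fun j => u (i, j)) (fun j => v (i, j)))
        (fun _ _ => Nat.zero_le _) (Finset.mem_univ i))
  · calc d ≤ dDia n x y := hK x hx y hy hxy
      _ ≤ _ := Finset.sum_le_sum fun i _ => hrow _ _ _ _ (hux i) (hvy i)

theorem stmt_14_general (k r : ℕ) (hk : 2 ≤ k) (I : Fin k → ℕ)
    (hI : ∑ j, (j.val + 1) * I j = r)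
    (b : Fin (2 ^ r) → colIdx k I → ZMod (2 ^ k))
    (hb_inj : Function.Injective b)
    (hb_range : Set.range b = colSet k I)
    (H : ZMod (2 ^ k) → Finset (Fin (2 ^ (k - 1)) → ZMod 2))
    (hpart : ∀ u : Fin (2 ^ (k - 1)) → ZMod 2, ∃! j, u ∈ H j)
    (hcard : ∀ j, (H j).card = 2 ^ (2 ^ (k - 1)) / (2 * 2 ^ (k - 1)))
    (hdist4 : ∀ j, ∀ u ∈ H j, ∀ v ∈ H j, u ≠ v → 4 ≤ hammingDist u v)
    (hparity : ∀ j, ∀ u ∈ H j, hammingNorm u % 2 = (ZMod.val j) % 2) :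
    ({u : Fin (2 ^ r) × Fin (2 ^ (k - 1)) → ZMod 2 |
        ∃ x ∈ kerCode k (2 ^ r) b, ∀ i, (fun j => u (i, j)) ∈ H (x i)}.ncard
        = 2 ^ (2 ^ r * 2 ^ (k - 1)) / (2 * (2 ^ r * 2 ^ (k - 1)))) ∧
      ∀ u ∈ {u : Fin (2 ^ r) × Fin (2 ^ (k - 1)) → ZMod 2 |
          ∃ x ∈ kerCode k (2 ^ r) b, ∀ i, (fun j => u (i, j)) ∈ H (x i)},
        ∀ v ∈ {u : Fin (2 ^ r) × Fin (2 ^ (k - 1)) → ZMod 2 |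
          ∃ x ∈ kerCode k (2 ^ r) b, ∀ i, (fun j => u (i, j)) ∈ H (x i)},
        u ≠ v → 4 ≤ hammingDist u v := by
  have hk0 : k ≠ 0 := by omega
  have hkm : k ≤ 2 ^ (k - 1) := by have := (k - 1).lt_two_pow_self; omega
  have hdisj : Pairwise (Disjoint on H) := fun a c hac =>
    Finset.disjoint_left.mpr fun u ha hc => hac ((hpart u).unique ha hc)
  have hone : ∀ i, b i (Sum.inl ()) = 1 := fun i => (hb_range ▸ Set.mem_range_self i).1
  change (phiCode (kerCode k (2 ^ r) b) H).ncard = _ ∧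
    ∀ u ∈ phiCode (kerCode k (2 ^ r) b) H, ∀ v ∈ phiCode (kerCode k (2 ^ r) b) H,
      u ≠ v → 4 ≤ hammingDist u v
  refine ⟨?_, fun u hu v hv => le_hammingDist_of_mem_phiCode
    (fun x hx y hy => four_le_dDia_of_mem_kerCode hk0 hb_inj hone hx hy) hdist4
    (fun _ _ _ _ => wtDia_sub_le_hammingDist (dvd_pow_self 2 hk0) hdisj hparity) hu hv⟩
  have htwo : 2 * 2 ^ (k - 1) = 2 ^ k := by
    rw [← pow_succ', Nat.sub_add_cancel (by omega : 1 ≤ k)]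
  have hblock : 2 ^ k * (2 ^ 2 ^ (k - 1) / (2 * 2 ^ (k - 1))) = 2 ^ 2 ^ (k - 1) := by
    rw [htwo]
    exact Nat.mul_div_cancel' (pow_dvd_pow 2 hkm)
  have hker := ncard_kerCode_mul (n := 2 ^ r) hb_range
  rw [hI] at hker
  refine (Nat.div_eq_of_eq_mul_left (by positivity) ?_).symm
  calc 2 ^ (2 ^ r * 2 ^ (k - 1))
      = (kerCode k (2 ^ r) b).ncard * 2 ^ (k + r)
          * (2 ^ 2 ^ (k - 1) / (2 * 2 ^ (k - 1))) ^ 2 ^ r := by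
        rw [hker, pow_mul 2 k, ← mul_pow, hblock, ← pow_mul, Nat.mul_comm (2 ^ r)]
    _ = _ := by
        rw [ncard_phiCode hdisj hcard, Fintype.card_fin, pow_add,
          show 2 * (2 ^ r * 2 ^ (k - 1)) = 2 ^ k * 2 ^ r by rw [← htwo]; ring]
        ring

/-- The co-`Z_{2^k}`-linear code `H̃_I = Φ(H_I)` is a binary
`(nm, 2^{nm}/(2nm), 4)` code with `m = 2^{k-1}`, `n = 2^r`: an extended
1-perfect binary code of length `n·2^{k-1}`. -/
theorem stmt_14 (k r : ℕ) (hk : 2 ≤ k) (I : Fin k → ℕ)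
    (hI : ∑ j, (j.val + 1) * I j = r)
    (b : Fin (2 ^ r) → colIdx k I → ZMod (2 ^ k))
    (hb_inj : Function.Injective b)
    (hb_range : Set.range b = colSet k I)
    (H : ZMod (2 ^ k) → Finset (Fin (2 ^ (k - 1)) → ZMod 2))
    (hpart : ∀ u : Fin (2 ^ (k - 1)) → ZMod 2, ∃! j, u ∈ H j)
    (hcard : ∀ j, (H j).card = 2 ^ (2 ^ (k - 1)) / (2 * 2 ^ (k - 1)))
    (hdist4 : ∀ j, ∀ u ∈ H j, ∀ v ∈ H j, u ≠ v → 4 ≤ hammingDist u v)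
    (hzero : (0 : Fin (2 ^ (k - 1)) → ZMod 2) ∈ H 0)
    (hparity : ∀ j, ∀ u ∈ H j, hammingNorm u % 2 = (ZMod.val j) % 2) :
    ({u : Fin (2 ^ r) × Fin (2 ^ (k - 1)) → ZMod 2 |
        ∃ x ∈ kerCode k (2 ^ r) b, ∀ i, (fun j => u (i, j)) ∈ H (x i)}.ncard
        = 2 ^ (2 ^ r * 2 ^ (k - 1)) / (2 * (2 ^ r * 2 ^ (k - 1)))) ∧
      ∀ u ∈ {u : Fin (2 ^ r) × Fin (2 ^ (k - 1)) → ZMod 2 |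
          ∃ x ∈ kerCode k (2 ^ r) b, ∀ i, (fun j => u (i, j)) ∈ H (x i)},
        ∀ v ∈ {u : Fin (2 ^ r) × Fin (2 ^ (k - 1)) → ZMod 2 |
          ∃ x ∈ kerCode k (2 ^ r) b, ∀ i, (fun j => u (i, j)) ∈ H (x i)},
        u ≠ v → 4 ≤ hammingDist u v :=
  stmt_14_general k r hk I hI b hb_inj hb_range H hpart hcard hdist4 hparity
end
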